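/- (Classification-calibration of the wave loss, minimizer-sign form; Theorem 1.) Let λ > 0 and a > 0, and let p ∈ [0, 1] with p ≠ 1/2. Then every global minimizer α* of the conditional wave-risk g_p over ℝ (i.e., every α* with g_p(α*) ≤ g_p(α) for all α ∈ ℝ) has the same sign as the Bayes classifier: α* > 0 if p > 1/2 and α* < 0 if p < 1/2. -/

import Mathlib

/-!
For `a ≥ 0` the wave loss `L` strictly increases with `|u|` on the positive side, and
`g_p(α) - g_p(-α) = (2p - 1)(L(1 - α) - L(1 + α))`. Hence if `α` has the sign opposite to
`2p - 1`, the reflection `-α` has strictly smaller risk, so a minimizer has the Bayes sign or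
is `0`. It is not `0`, since there the risk has derivative `(1 - 2p) L'(1) ≠ 0`.
-/

noncomputable def waveLoss (a lam u : ℝ) : ℝ :=
  (1 / lam) * (1 - 1 / (1 + lam * u ^ 2 * Real.exp (a * u)))

noncomputable def condWaveRisk (a lam p α : ℝ) : ℝ :=
  p * waveLoss a lam (1 - α) + (1 - p) * waveLoss a lam (1 + α)

open Real

section WaveLoss

variable {a lam : ℝ}

lemma sq_mul_exp_lt_of_abs_lt (ha : 0 ≤ a) {u v : ℝ} (h : |u| < v) :
    u ^ 2 * exp (a * u) < v ^ 2 * exp (a * v) := by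
  obtain ⟨hvu, huv⟩ := abs_lt.mp h
  have hexp : exp (a * u) ≤ exp (a * v) := exp_le_exp.mpr (by nlinarith)
  calc u ^ 2 * exp (a * u) ≤ u ^ 2 * exp (a * v) := by gcongr
    _ < v ^ 2 * exp (a * v) := mul_lt_mul_of_pos_right (sq_lt_sq' hvu huv) (exp_pos _)

lemma waveLoss_lt_of_abs_lt (hlam : 0 < lam) (ha : 0 ≤ a) {u v : ℝ} (h : |u| < v) :
    waveLoss a lam u < waveLoss a lam v := by
  have hcore := sq_mul_exp_lt_of_abs_lt ha h
  unfold waveLoss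
  simp only [mul_assoc]
  gcongr

lemma hasDerivAt_waveLoss (hlam : 0 < lam) (u : ℝ) :
    HasDerivAt (waveLoss a lam)
      ((2 * u + a * u ^ 2) * exp (a * u) / (1 + lam * u ^ 2 * exp (a * u)) ^ 2) u := by
  have hexp : HasDerivAt (fun u ↦ exp (a * u)) (exp (a * u) * a) u := by
    simpa using ((hasDerivAt_id u).const_mul a).exp
  have hden := (((hasDerivAt_pow 2 u).fun_mul hexp).const_mul lam).const_add 1
  have hpos : 0 < 1 + lam * (u ^ 2 * exp (a * u)) := by positivity
  have hwave :
      waveLoss a lam = fun u ↦ 1 / lam * (1 - (1 + lam * (u ^ 2 * exp (a * u)))⁻¹) := by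
    funext v
    simp only [waveLoss, one_div, mul_assoc]
  rw [hwave]
  refine (((hden.inv hpos.ne').const_sub 1).const_mul (1 / lam)).congr_deriv ?_
  field_simp
  ring

end WaveLoss

section CondWaveRisk

variable {a lam p : ℝ}

lemma condWaveRisk_sub_condWaveRisk_neg (α : ℝ) :
    condWaveRisk a lam p α - condWaveRisk a lam p (-α) =
      (2 * p - 1) * (waveLoss a lam (1 - α) - waveLoss a lam (1 + α)) := by
  simp only [condWaveRisk, sub_neg_eq_add, ← sub_eq_add_neg]
  ring

lemma condWaveRisk_neg_lt_of_mul_neg (hlam : 0 < lam) (ha : 0 ≤ a) {α : ℝ}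
    (h : (2 * p - 1) * α < 0) : condWaveRisk a lam p (-α) < condWaveRisk a lam p α := by
  suffices 0 < (2 * p - 1) * (waveLoss a lam (1 - α) - waveLoss a lam (1 + α)) by
    linarith [condWaveRisk_sub_condWaveRisk_neg (a := a) (lam := lam) (p := p) α]
  rcases mul_neg_iff.mp h with ⟨hp, hα⟩ | ⟨hp, hα⟩
  · have hL : waveLoss a lam (1 + α) < waveLoss a lam (1 - α) :=
      waveLoss_lt_of_abs_lt hlam ha (abs_lt.mpr ⟨by linarith, by linarith⟩)
    exact mul_pos hp (sub_pos.mpr hL)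
  · have hL : waveLoss a lam (1 - α) < waveLoss a lam (1 + α) :=
      waveLoss_lt_of_abs_lt hlam ha (abs_lt.mpr ⟨by linarith, by linarith⟩)
    exact mul_pos_of_neg_of_neg hp (sub_neg.mpr hL)

lemma hasDerivAt_condWaveRisk_zero {L' : ℝ} (h : HasDerivAt (waveLoss a lam) L' 1) :
    HasDerivAt (condWaveRisk a lam p) ((1 - 2 * p) * L') 0 := by
  have h₁ := ((sub_zero (1 : ℝ) ▸ h).comp_const_sub 1 0).const_mul p
  have h₂ := ((add_zero (1 : ℝ) ▸ h).comp_const_add 1 0).const_mul (1 - p)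
  exact (h₁.fun_add h₂).congr_deriv (by ring)

lemma not_isLocalMin_condWaveRisk_zero (hlam : 0 < lam) (ha : 0 ≤ a) (hp : p ≠ 1 / 2) :
    ¬ IsLocalMin (condWaveRisk a lam p) 0 := by
  intro hmin
  have hderiv := hasDerivAt_condWaveRisk_zero (p := p) (hasDerivAt_waveLoss (a := a) hlam 1)
  have hL' : 0 < (2 * 1 + a * 1 ^ 2) * exp (a * 1) / (1 + lam * 1 ^ 2 * exp (a * 1)) ^ 2 := by
    positivity
  have hp' : 1 - 2 * p ≠ 0 := fun h ↦ hp (by linarith)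
  exact mul_ne_zero hp' hL'.ne' (hmin.hasDerivAt_eq_zero hderiv)

end CondWaveRisk

theorem wave_loss_classification_calibrated_minimizer_sign_general (a lam p : ℝ)
    (hlam : 0 < lam) (ha : 0 < a) (hp' : p ≠ 1 / 2) :
    ∀ αstar : ℝ, (∀ α : ℝ, condWaveRisk a lam p αstar ≤ condWaveRisk a lam p α) →
      (1 / 2 < p → 0 < αstar) ∧ (p < 1 / 2 → αstar < 0) := by
  intro αstar hmin
  have hne : αstar ≠ 0 := by
    rintro rfl
    exact not_isLocalMin_condWaveRisk_zero hlam ha.le hp' (Filter.Eventually.of_forall hmin)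
  have hsign : ¬ (2 * p - 1) * αstar < 0 := fun h ↦
    (condWaveRisk_neg_lt_of_mul_neg hlam ha.le h).not_ge (hmin _)
  constructor
  · intro hp
    by_contra! hα
    exact hsign (mul_neg_of_pos_of_neg (by linarith) (hα.lt_of_ne hne))
  · intro hp
    by_contra! hα
    exact hsign (mul_neg_of_neg_of_pos (by linarith) (hα.lt_of_ne' hne))

theorem wave_loss_classification_calibrated_minimizer_sign (a lam p : ℝ)
    (hlam : 0 < lam) (ha : 0 < a) (hp : p ∈ Set.Icc (0 : ℝ) 1) (hp' : p ≠ 1 / 2) :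
    ∀ αstar : ℝ, (∀ α : ℝ, condWaveRisk a lam p αstar ≤ condWaveRisk a lam p α) →
      (1 / 2 < p → 0 < αstar) ∧ (p < 1 / 2 → αstar < 0) :=
  wave_loss_classification_calibrated_minimizer_sign_general a lam p hlam ha hp'
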